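/- (Pseudo-space-filling ordering of an arbitrary subset of a grid.) There is a constant C > 0 with the following property. Let h ≥ 0 be an integer, let X = {0,…,2^h − 1}² ⊆ ℤ², and let Y ⊆ X be nonempty. Then there exists a bijection b : Y → {0, 1, …, |Y| − 1} such that for every integer Δ with 1 ≤ Δ ≤ |Y| − 1, ∑_{ℓ=0}^{|Y|−1−Δ} ‖b⁻¹(ℓ) − b⁻¹(ℓ + Δ)‖₂ ≤ C · 4^h · √Δ. Equivalently, writing |Y| = ε·|X|, the sum is at most C·(√Δ/ε)·|Y|. -/

import Mathlib

/-!
Order `Y` along the Z-order (Morton) curve. Two points whose Morton codes agree after division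
by `4 ^ k` lie in one dyadic square of side `2 ^ k`, hence are at distance less than `2 ^ (k + 1)`.
Since the codes increase along the ordering, for a shift `Δ` at most `Δ · 4 ^ (h - m)` of the
pairs `(ℓ, ℓ + Δ)` are split between different squares of level `m`. Bounding the distance of a
pair by `2 ^ (m₀ + 1)` plus `2 ^ (m + 2)` for every level `m ≥ m₀` at which it is split, and
summing over `ℓ` with `4 ^ m₀ ≈ Δ`, gives `O(4 ^ h · √Δ)`.
-/

open Finset

noncomputable def eDist2 (p q : ℤ × ℤ) : ℝ :=
  Real.sqrt (((p.1 : ℝ) - (q.1 : ℝ)) ^ 2 + ((p.2 : ℝ) - (q.2 : ℝ)) ^ 2)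

def spread : ℕ → ℕ
  | 0 => 0
  | n + 1 => 4 * spread ((n + 1) / 2) + (n + 1) % 2

lemma spread_eq (n : ℕ) : spread n = 4 * spread (n / 2) + n % 2 := by
  cases n <;> simp [spread]

-- interleaves the binary digits of `x` (even positions) and `y` (odd positions)
def morton (x y : ℕ) : ℕ := spread x + 2 * spread y

lemma morton_eq (x y : ℕ) : morton x y = 4 * morton (x / 2) (y / 2) + (x % 2 + 2 * (y % 2)) := by
  rw [morton, morton, spread_eq x, spread_eq y]; ring

@[simp] lemma morton_zero_zero : morton 0 0 = 0 := by simp [morton, spread]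

lemma morton_div_four (x y : ℕ) : morton x y / 4 = morton (x / 2) (y / 2) := by
  rw [morton_eq]; omega

lemma morton_div_four_pow (x y k : ℕ) : morton x y / 4 ^ k = morton (x / 2 ^ k) (y / 2 ^ k) := by
  induction k generalizing x y with
  | zero => simp
  | succ k ih => simp only [pow_succ', ← Nat.div_div_eq_div_mul, morton_div_four, ih]

lemma morton_lt_four_pow {x y h : ℕ} (hx : x < 2 ^ h) (hy : y < 2 ^ h) : morton x y < 4 ^ h := by
  have := morton_div_four_pow x y h
  rw [Nat.div_eq_of_lt hx, Nat.div_eq_of_lt hy, morton_zero_zero, Nat.div_eq_zero_iff] at this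
  exact this.resolve_left (by positivity)

lemma morton_inj_of_lt {n x y x' y' : ℕ} (hx : x < 2 ^ n) (hy : y < 2 ^ n) (hx' : x' < 2 ^ n)
    (hy' : y' < 2 ^ n) (h : morton x y = morton x' y') : x = x' ∧ y = y' := by
  induction n generalizing x y x' y' with
  | zero => simp_all
  | succ n ih =>
    rw [pow_succ] at hx hy hx' hy'
    have halves := ih (x := x / 2) (y := y / 2) (x' := x' / 2) (y' := y' / 2)
      (by omega) (by omega) (by omega) (by omega) (by rw [← morton_div_four, h, morton_div_four])
    have bits := congrArg (· % 4) h
    simp only [morton_eq x y, morton_eq x' y'] at bits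
    omega

lemma morton_inj {x y x' y' : ℕ} (h : morton x y = morton x' y') : x = x' ∧ y = y' :=
  have lt {z : ℕ} (hz : z ≤ x + y + x' + y') : z < 2 ^ (x + y + x' + y') :=
    hz.trans_lt Nat.lt_two_pow_self
  morton_inj_of_lt (lt (by omega)) (lt (by omega)) (lt (by omega)) (lt (by omega)) h

lemma div_two_pow_eq_of_morton_div_four_pow_eq {x y x' y' k : ℕ}
    (h : morton x y / 4 ^ k = morton x' y' / 4 ^ k) :
    x / 2 ^ k = x' / 2 ^ k ∧ y / 2 ^ k = y' / 2 ^ k := by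
  rw [morton_div_four_pow, morton_div_four_pow] at h
  exact morton_inj h

lemma card_filter_shift_ne_le {q : ℕ → ℕ} {N Δ Q : ℕ} (hq : MonotoneOn q (Set.Iio N))
    (hQ : ∀ ℓ < N, q ℓ ≤ Q) : #{ℓ ∈ range (N - Δ) | q ℓ ≠ q (ℓ + Δ)} ≤ Δ * Q := by
  rcases le_or_gt N Δ with hN | hN
  · simp [Nat.sub_eq_zero_of_le hN]
  -- every jump of the nondecreasing `ℕ`-valued `q` has height at least one; the heights telescope
  have jumps : #{ℓ ∈ range (N - Δ) | q ℓ ≠ q (ℓ + Δ)} + ∑ ℓ ∈ range (N - Δ), q ℓ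
      ≤ ∑ ℓ ∈ range (N - Δ), q (Δ + ℓ) := by
    rw [card_filter, ← sum_add_distrib]
    refine sum_le_sum fun ℓ hℓ => ?_
    have : q ℓ ≤ q (ℓ + Δ) := hq (by simp at hℓ ⊢; omega) (by simp at hℓ ⊢; omega) (by omega)
    rw [add_comm Δ]
    split_ifs <;> omega
  have split₁ := sum_range_add q Δ (N - Δ)
  have split₂ := sum_range_add q (N - Δ) Δ
  have top : ∑ ℓ ∈ range Δ, q (N - Δ + ℓ) ≤ Δ * Q := by
    simpa using sum_le_sum fun ℓ (hℓ : ℓ ∈ range Δ) => hQ _ (by simp at hℓ; omega)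
  rw [Nat.add_sub_cancel' hN.le] at split₁
  rw [Nat.sub_add_cancel hN.le] at split₂
  omega

lemma le_add_sum_of_forall_le {P : ℕ → Prop} [DecidablePred P] {w : ℕ → ℝ} (hw : ∀ m, 0 ≤ w m)
    {d : ℝ} (hd : ∀ k, P k → d ≤ w k) {m₀ n : ℕ} (hn : m₀ ≤ n) (hPn : P n) :
    d ≤ w m₀ + ∑ m ∈ Ico m₀ n, if P m then 0 else w (m + 1) := by
  induction n, hn using Nat.le_induction with
  | base => simpa using hd m₀ hPn
  | succ n hn ih =>
    rw [sum_Ico_succ_top hn]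
    by_cases hPn' : P n
    · simpa [hPn'] using ih hPn'
    · have : 0 ≤ w m₀ + ∑ m ∈ Ico m₀ n, if P m then 0 else w (m + 1) :=
        add_nonneg (hw _) (sum_nonneg fun m _ => by split_ifs <;> simp [hw])
      simp only [hPn', if_false]
      linarith [hd _ hPn]

lemma sum_Ico_two_pow_mul_four_pow_le (m₀ h : ℕ) :
    ∑ m ∈ Ico m₀ h, (2 : ℝ) ^ (m + 2) * 4 ^ (h - m) ≤ 8 * 4 ^ h * (1 / 2) ^ m₀ := by
  have term : ∀ m ∈ Ico m₀ h, (2 : ℝ) ^ (m + 2) * 4 ^ (h - m) = 4 * 4 ^ h * (1 / 2) ^ m := by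
    intro m hm
    have : (4 : ℝ) ^ h = 4 ^ (h - m) * (2 ^ m * 2 ^ m) := by
      rw [← mul_pow, show (2 : ℝ) * 2 = 4 by norm_num, ← pow_add,
        Nat.sub_add_cancel (mem_Ico.1 hm).2.le]
    rw [this, pow_add, div_pow]; field_simp; ring
  rw [sum_congr rfl term, ← mul_sum]
  calc 4 * 4 ^ h * ∑ m ∈ Ico m₀ h, (1 / 2 : ℝ) ^ m ≤ 4 * 4 ^ h * ((1 / 2) ^ m₀ / (1 - 1 / 2)) := by
        gcongr; exact geom_sum_Ico_le_of_lt_one (by norm_num) (by norm_num)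
    _ = 8 * 4 ^ h * (1 / 2) ^ m₀ := by ring

lemma two_pow_log_four_le_sqrt {Δ : ℕ} (hΔ : Δ ≠ 0) : (2 : ℝ) ^ Nat.log 4 Δ ≤ √Δ := by
  rw [Real.le_sqrt (by positivity) (by positivity), ← pow_mul, mul_comm, pow_mul]
  exact_mod_cast (show 2 ^ 2 = 4 from rfl) ▸ Nat.pow_log_le_self 4 hΔ

lemma mul_half_pow_log_four_le (Δ : ℕ) : (Δ : ℝ) * (1 / 2) ^ Nat.log 4 Δ ≤ 2 * √Δ := by
  set m₀ := Nat.log 4 Δ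
  have hΔ_lt : (Δ : ℝ) < (2 * 2 ^ m₀) ^ 2 := by
    rw [mul_pow, ← pow_mul, mul_comm m₀, pow_mul]
    exact_mod_cast (pow_succ' 4 m₀ ▸ Nat.lt_pow_succ_log_self (by norm_num) Δ)
  have hsqrt : √Δ < 2 * 2 ^ m₀ := (Real.sqrt_lt' (by positivity)).2 hΔ_lt
  have : (Δ : ℝ) ≤ 2 * 2 ^ m₀ * √Δ := by
    nlinarith [Real.mul_self_sqrt (Nat.cast_nonneg Δ), Real.sqrt_nonneg Δ]
  calc (Δ : ℝ) * (1 / 2) ^ m₀ ≤ 2 * 2 ^ m₀ * √Δ * (1 / 2) ^ m₀ := by gcongr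
    _ = 2 * √Δ * (2 * (1 / 2)) ^ m₀ := by rw [mul_pow]; ring
    _ = 2 * √Δ := by norm_num

lemma sum_le_of_close_on_dyadic_blocks {f : ℕ → ℕ} {d : ℕ → ℝ} {N Δ h : ℕ} (hΔ : 0 < Δ)
    (hΔN : Δ ≤ N) (hN : N ≤ 4 ^ h) (hf : MonotoneOn f (Set.Iio N)) (hfh : ∀ ℓ < N, f ℓ < 4 ^ h)
    (hd : ∀ ℓ < N - Δ, ∀ k, f ℓ / 4 ^ k = f (ℓ + Δ) / 4 ^ k → d ℓ ≤ 2 ^ (k + 1)) :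
    ∑ ℓ ∈ range (N - Δ), d ℓ ≤ 18 * 4 ^ h * √Δ := by
  -- blocks of side `2 ^ m₀ ≈ √Δ` balance the two error terms
  set m₀ := Nat.log 4 Δ
  have hm₀h : m₀ ≤ h :=
    (Nat.log_mono_right (hΔN.trans hN)).trans (Nat.log_pow (by norm_num) h).le
  have pointwise : ∀ ℓ ∈ range (N - Δ), d ℓ ≤ 2 ^ (m₀ + 1) +
      ∑ m ∈ Ico m₀ h, if f ℓ / 4 ^ m = f (ℓ + Δ) / 4 ^ m then 0 else (2 : ℝ) ^ (m + 2) := by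
    intro ℓ hℓ
    rw [mem_range] at hℓ
    refine le_add_sum_of_forall_le (w := fun k => (2 : ℝ) ^ (k + 1)) (fun _ => by positivity)
      (hd ℓ hℓ) hm₀h ?_
    rw [Nat.div_eq_of_lt (hfh ℓ (by omega)), Nat.div_eq_of_lt (hfh (ℓ + Δ) (by omega))]
  have jumps (m : ℕ) (hm : m ≤ h) :
      #{ℓ ∈ range (N - Δ) | f ℓ / 4 ^ m ≠ f (ℓ + Δ) / 4 ^ m} ≤ Δ * 4 ^ (h - m) := by
    refine card_filter_shift_ne_le (fun a ha b hb hab => Nat.div_le_div_right (hf ha hb hab))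
      fun ℓ hℓ => ?_
    rw [← Nat.pow_div hm (by norm_num)]
    exact Nat.div_le_div_right (hfh ℓ hℓ).le
  calc ∑ ℓ ∈ range (N - Δ), d ℓ
      ≤ ∑ ℓ ∈ range (N - Δ), (2 ^ (m₀ + 1) + ∑ m ∈ Ico m₀ h,
          if f ℓ / 4 ^ m = f (ℓ + Δ) / 4 ^ m then 0 else (2 : ℝ) ^ (m + 2)) := sum_le_sum pointwise
    _ = (N - Δ : ℕ) * 2 ^ (m₀ + 1) + ∑ m ∈ Ico m₀ h,
          (2 : ℝ) ^ (m + 2) * #{ℓ ∈ range (N - Δ) | f ℓ / 4 ^ m ≠ f (ℓ + Δ) / 4 ^ m} := by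
      rw [sum_add_distrib, sum_comm]
      simp [sum_ite, mul_comm]
    _ ≤ 4 ^ h * 2 ^ (m₀ + 1) + ∑ m ∈ Ico m₀ h, (2 : ℝ) ^ (m + 2) * (Δ * 4 ^ (h - m)) := by
      gcongr with m hm
      · exact_mod_cast (Nat.sub_le N Δ).trans hN
      · exact_mod_cast jumps m (mem_Ico.1 hm).2.le
    _ ≤ 18 * 4 ^ h * √Δ := by
      simp_rw [mul_left_comm _ (Δ : ℝ), ← mul_sum]
      rw [pow_succ (2 : ℝ) m₀]
      have tail :=
        mul_le_mul_of_nonneg_left (sum_Ico_two_pow_mul_four_pow_le m₀ h) (Nat.cast_nonneg Δ)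
      have h4 : (0 : ℝ) ≤ 4 ^ h := by positivity
      linarith [mul_le_mul_of_nonneg_left (two_pow_log_four_le_sqrt hΔ.ne') h4,
        mul_le_mul_of_nonneg_left (mul_half_pow_log_four_le Δ) h4]

lemma Finset.exists_enum_strictMonoOn {α : Type*} [Nonempty α] (Y : Finset α) (key : α → ℕ)
    (hkey : Set.InjOn key Y) :
    ∃ g : ℕ → α, (∀ ℓ < #Y, g ℓ ∈ Y) ∧ (∀ y ∈ Y, ∃ ℓ < #Y, g ℓ = y) ∧
      StrictMonoOn (key ∘ g) (Set.Iio #Y) := by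
  set K := Y.image key
  have hK : (Set.ofPred (· ∈ K)).Finite := K.finite_toSet
  have hcard : #hK.toFinset = #Y := by
    rw [← card_image_of_injOn hkey]; congr; ext; simp [K]
  have pullback {n : ℕ} (hn : n ∈ K) : Function.invFunOn key Y n ∈ Y ∧
      key (Function.invFunOn key Y n) = n := by
    obtain ⟨y, hy, rfl⟩ := mem_image.1 hn
    exact ⟨Function.invFunOn_mem ⟨y, hy, rfl⟩, Function.invFunOn_eq ⟨y, hy, rfl⟩⟩
  have nth_mem {ℓ : ℕ} (hℓ : ℓ < #Y) : Nat.nth (· ∈ K) ℓ ∈ K :=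
    Nat.nth_mem_of_lt_card hK (hcard ▸ hℓ)
  refine ⟨Function.invFunOn key Y ∘ Nat.nth (· ∈ K), fun ℓ hℓ => (pullback (nth_mem hℓ)).1,
    fun y hy => ?_, ?_⟩
  · obtain ⟨ℓ, hℓ, hℓy⟩ := Nat.exists_lt_card_finite_nth_eq hK (mem_image_of_mem key hy)
    rw [hcard] at hℓ
    exact ⟨ℓ, hℓ, hkey (pullback (nth_mem hℓ)).1 hy ((pullback (nth_mem hℓ)).2.trans hℓy)⟩
  · refine (hcard ▸ Nat.nth_strictMonoOn hK).congr fun ℓ hℓ => ?_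
    exact ((pullback (nth_mem hℓ)).2).symm

lemma eDist2_le_abs_add_abs (p q : ℤ × ℤ) :
    eDist2 p q ≤ |(p.1 : ℝ) - q.1| + |(p.2 : ℝ) - q.2| := by
  rw [eDist2, Real.sqrt_le_left (by positivity)]
  nlinarith [sq_abs ((p.1 : ℝ) - q.1), sq_abs ((p.2 : ℝ) - q.2),
    abs_nonneg ((p.1 : ℝ) - q.1), abs_nonneg ((p.2 : ℝ) - q.2)]

lemma Nat.abs_sub_lt_of_div_eq {x y n : ℕ} (hn : 0 < n) (h : x / n = y / n) :
    |(x : ℝ) - y| < n := by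
  have hx := h ▸ Nat.div_add_mod x n
  have hy := Nat.div_add_mod y n
  have := Nat.mod_lt x hn
  have := Nat.mod_lt y hn
  have hxy : (x : ℝ) < y + n := by exact_mod_cast (show x < y + n by omega)
  have hyx : (y : ℝ) < x + n := by exact_mod_cast (show y < x + n by omega)
  rw [abs_sub_lt_iff]
  constructor <;> linarith

def mortonKey (p : ℤ × ℤ) : ℕ := morton p.1.toNat p.2.toNat

lemma mortonKey_injOn : Set.InjOn mortonKey {p | 0 ≤ p.1 ∧ 0 ≤ p.2} := by
  intro p ⟨hp₁, hp₂⟩ q ⟨hq₁, hq₂⟩ h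
  obtain ⟨h₁, h₂⟩ := morton_inj h
  exact Prod.ext (by omega) (by omega)

lemma mortonKey_lt_four_pow {p : ℤ × ℤ} {h : ℕ}
    (hp : 0 ≤ p.1 ∧ p.1 < 2 ^ h ∧ 0 ≤ p.2 ∧ p.2 < 2 ^ h) :
    mortonKey p < 4 ^ h :=
  morton_lt_four_pow ((Int.toNat_lt_of_ne_zero (by positivity)).2 (by exact_mod_cast hp.2.1))
    ((Int.toNat_lt_of_ne_zero (by positivity)).2 (by exact_mod_cast hp.2.2.2))

lemma eDist2_le_of_mortonKey_div_eq {p q : ℤ × ℤ} {k : ℕ} (hp : 0 ≤ p.1 ∧ 0 ≤ p.2)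
    (hq : 0 ≤ q.1 ∧ 0 ≤ q.2) (h : mortonKey p / 4 ^ k = mortonKey q / 4 ^ k) :
    eDist2 p q ≤ 2 ^ (k + 1) := by
  obtain ⟨h₁, h₂⟩ := div_two_pow_eq_of_morton_div_four_pow_eq h
  have d₁ := Nat.abs_sub_lt_of_div_eq (by positivity) h₁
  have d₂ := Nat.abs_sub_lt_of_div_eq (by positivity) h₂
  have cast_toNat {z : ℤ} (hz : 0 ≤ z) : ((z.toNat : ℕ) : ℝ) = z := by
    exact_mod_cast Int.toNat_of_nonneg hz
  rw [cast_toNat hp.1, cast_toNat hq.1] at d₁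
  rw [cast_toNat hp.2, cast_toNat hq.2] at d₂
  push_cast at d₁ d₂
  calc eDist2 p q ≤ |(p.1 : ℝ) - q.1| + |(p.2 : ℝ) - q.2| := eDist2_le_abs_add_abs p q
    _ ≤ 2 ^ (k + 1) := by rw [pow_succ]; linarith

theorem pseudo_space_filling_curve :
    ∃ C : ℝ, 0 < C ∧
    ∀ (h : ℕ) (Y : Finset (ℤ × ℤ)),
      (∀ y ∈ Y, 0 ≤ y.1 ∧ y.1 < 2 ^ h ∧ 0 ≤ y.2 ∧ y.2 < 2 ^ h) →
      Y.Nonempty →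
      ∃ g : ℕ → ℤ × ℤ,
        (∀ ℓ < Y.card, g ℓ ∈ Y) ∧
        (∀ y ∈ Y, ∃ ℓ < Y.card, g ℓ = y) ∧
        Set.InjOn g (Set.Iio Y.card) ∧
        (∀ Δ : ℕ, 1 ≤ Δ → Δ ≤ Y.card - 1 →
          ∑ ℓ ∈ Finset.range (Y.card - Δ), eDist2 (g ℓ) (g (ℓ + Δ)) ≤
            C * (4 : ℝ) ^ h * Real.sqrt Δ) := by
  refine ⟨18, by norm_num, fun h Y hY _ => ?_⟩
  have hY₀ : ∀ y ∈ Y, 0 ≤ y.1 ∧ 0 ≤ y.2 := fun y hy => ⟨(hY y hy).1, (hY y hy).2.2.1⟩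
  have hkey : Set.InjOn mortonKey Y := mortonKey_injOn.mono hY₀
  have hcard : #Y ≤ 4 ^ h := by
    simpa using card_le_card_of_injOn mortonKey
      (fun y hy => mem_range.2 (mortonKey_lt_four_pow (hY y hy))) hkey
  obtain ⟨g, hgY, hg_surj, hg_mono⟩ := Y.exists_enum_strictMonoOn mortonKey hkey
  refine ⟨g, hgY, hg_surj, hg_mono.injOn.of_comp, fun Δ hΔ hΔY => ?_⟩
  exact sum_le_of_close_on_dyadic_blocks hΔ (by omega) hcard hg_mono.monotoneOn
    (fun ℓ hℓ => mortonKey_lt_four_pow (hY _ (hgY ℓ hℓ)))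
    (fun ℓ hℓ k hk => eDist2_le_of_mortonKey_div_eq (hY₀ _ (hgY ℓ (by omega)))
      (hY₀ _ (hgY (ℓ + Δ) (by omega))) hk)
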